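/- arXiv:1211.1621 — 3 statements merged into one kernel-verified Lean document; each statement's English description precedes it below -/
import Mathlib

section
/- Let n ≥ 1 and let f̃ : ℝ^{n×n} → ℝ be continuously differentiable. Then ∫_{SO(n)} skew((∇f̃(Z))ᵀ · Z) dμ(Z) = 0 (the zero n×n matrix). In particular, if f̃ is positive and its restriction to SO(n) is a probability density with respect to μ, the score map G(Z) = (1/f̃(Z))·skew((∇f̃(Z))ᵀZ) has zero mean: ∫_{SO(n)} G(Z) f̃(Z) dμ(Z) = 0. -/
open Matrix MeasureTheory Real

noncomputable section

attribute [local instance] Matrix.normedAddCommGroup Matrix.normedSpace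

/-- The special orthogonal group `SO(n)`, as a set of `n × n` real matrices. -/
def SO (n : ℕ) : Set (Matrix (Fin n) (Fin n) ℝ) :=
  {A | A * Aᵀ = 1 ∧ A.det = 1}

instance {n : ℕ} : MeasurableSpace (Matrix (Fin n) (Fin n) ℝ) :=
  (inferInstance : MeasurableSpace (Fin n → Fin n → ℝ))

/-- `μ` is the Haar probability measure of `SO(n)`. -/
def IsHaarSO (n : ℕ) (μ : Measure (Matrix (Fin n) (Fin n) ℝ)) : Prop :=
  IsProbabilityMeasure μ ∧ μ (SO n)ᶜ = 0 ∧
    (∀ g ∈ SO n, Measure.map (fun Z => g * Z) μ = μ) ∧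
    (∀ g ∈ SO n, Measure.map (fun Z => Z * g) μ = μ)

/-- The skew-symmetric part `(A - Aᵀ)/2` of a square matrix. -/
def skewPart {n : ℕ} (A : Matrix (Fin n) (Fin n) ℝ) : Matrix (Fin n) (Fin n) ℝ :=
  (2 : ℝ)⁻¹ • (A - Aᵀ)

/-- The Euclidean (Frobenius) gradient of `f : ℝ^{n×n} → ℝ`: the matrix of partial
derivatives of `f` with respect to the entries of its argument. -/
def grad {n : ℕ} (f : Matrix (Fin n) (Fin n) ℝ → ℝ) (Z : Matrix (Fin n) (Fin n) ℝ) :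
    Matrix (Fin n) (Fin n) ℝ :=
  Matrix.of fun i j => fderiv ℝ f Z (Matrix.single i j 1)

/-- The score map `G(Z) = (1 / f(Z)) · skew((∇f(Z))ᵀ Z)`. -/
def scoreG {n : ℕ} (f : Matrix (Fin n) (Fin n) ℝ → ℝ) (Z : Matrix (Fin n) (Fin n) ℝ) :
    Matrix (Fin n) (Fin n) ℝ :=
  (f Z)⁻¹ • skewPart ((grad f Z)ᵀ * Z)


/-!
Right-invariance of `μ` under the rotations `R t` in the `(i, j)`-coordinate plane makes
`t ↦ ∫ f (Z * R t) dμ` constant. Differentiating under the integral sign at `t = 0`, which is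
legitimate because `μ` lives on the compact set `SO(n)`, gives `∫ Df(Z) (Z * K) dμ = 0` for
`K = Eᵢⱼ - Eⱼᵢ`, and the `(i, j)` entry of `skew((∇f)ᵀ Z)` is `-½ Df(Z) (Z * K)`.
Where `f > 0`, `f • G` is `skew((∇f)ᵀ Z)` itself.
-/

namespace Matrix

variable {m : Type*} [DecidableEq m] {i j : m}

def planeProj (i j : m) : Matrix m m ℝ := single i i 1 + single j j 1

def planeSkew (i j : m) : Matrix m m ℝ := single i j 1 - single j i 1

def givens (i j : m) (t : ℝ) : Matrix m m ℝ :=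
  1 + (cos t - 1) • planeProj i j + sin t • planeSkew i j

@[simp] lemma planeSkew_self (i : m) : planeSkew i i = 0 := sub_self _

lemma transpose_planeProj : (planeProj i j)ᵀ = planeProj i j := by
  simp [planeProj]

lemma transpose_planeSkew : (planeSkew i j)ᵀ = -planeSkew i j := by
  simp [planeSkew]

@[simp] lemma givens_zero : givens i j 0 = 1 := by
  simp [givens]

lemma transpose_givens (t : ℝ) : (givens i j t)ᵀ = givens i j (-t) := by
  simp [givens, transpose_planeProj, transpose_planeSkew]

variable [Fintype m]

lemma hasDerivAt_givens (t : ℝ) :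
    HasDerivAt (givens i j) ((-sin t) • planeProj i j + cos t • planeSkew i j) t :=
  ((((hasDerivAt_cos t).sub_const 1).smul_const (planeProj i j)).const_add 1).add
    ((hasDerivAt_sin t).smul_const (planeSkew i j))

lemma planeProj_mul_planeProj (hij : i ≠ j) :
    planeProj i j * planeProj i j = planeProj i j := by
  simp [planeProj, add_mul, mul_add, single_mul_single_of_ne, hij, hij.symm]

lemma planeSkew_mul_planeSkew (hij : i ≠ j) :
    planeSkew i j * planeSkew i j = -planeProj i j := by
  simp [planeProj, planeSkew, sub_mul, mul_sub, single_mul_single_of_ne, hij, hij.symm]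
  abel

lemma planeProj_mul_planeSkew (hij : i ≠ j) :
    planeProj i j * planeSkew i j = planeSkew i j := by
  simp [planeProj, planeSkew, add_mul, mul_sub, single_mul_single_of_ne, hij, hij.symm]

lemma planeSkew_mul_planeProj (hij : i ≠ j) :
    planeSkew i j * planeProj i j = planeSkew i j := by
  simp [planeProj, planeSkew, sub_mul, mul_add, single_mul_single_of_ne, hij, hij.symm]
  abel

lemma givens_mul_givens (hij : i ≠ j) (s t : ℝ) :
    givens i j s * givens i j t = givens i j (s + t) := by
  simp only [givens, add_mul, mul_add, one_mul, mul_one, Matrix.smul_mul, Matrix.mul_smul,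
    planeProj_mul_planeProj hij, planeSkew_mul_planeSkew hij, planeProj_mul_planeSkew hij,
    planeSkew_mul_planeProj hij, cos_add, sin_add, smul_smul, smul_neg]
  module

lemma givens_mul_transpose_givens (hij : i ≠ j) (t : ℝ) :
    givens i j t * (givens i j t)ᵀ = 1 := by
  rw [transpose_givens, givens_mul_givens hij, add_neg_cancel, givens_zero]

end Matrix

section SpecialOrthogonal

variable {n : ℕ}

lemma givens_mem_SO {i j : Fin n} (hij : i ≠ j) (t : ℝ) : givens i j t ∈ SO n := by
  have horth := givens_mul_transpose_givens hij t
  have hdet_sq : (givens i j t).det * (givens i j t).det = 1 := by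
    simpa [det_transpose] using congrArg det horth
  have hdet_nonneg : 0 ≤ (givens i j t).det := by
    rw [← add_halves t, ← givens_mul_givens hij, det_mul]
    exact mul_self_nonneg _
  exact ⟨horth, by nlinarith⟩

lemma norm_le_one_of_mem_SO {A : Matrix (Fin n) (Fin n) ℝ} (hA : A ∈ SO n) : ‖A‖ ≤ 1 := by
  refine (norm_le_iff zero_le_one).2 fun a b => ?_
  have hrow : ∑ k, A a k * A a k = 1 := by
    simpa [mul_apply] using congrFun (congrFun hA.1 a) a
  have hab : A a b * A a b ≤ 1 :=
    hrow ▸ Finset.single_le_sum (f := fun k => A a k * A a k) (fun k _ => mul_self_nonneg _)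
      (Finset.mem_univ b)
  simpa [Real.norm_eq_abs] using abs_le_one_iff_mul_self_le_one.2 hab

lemma isCompact_SO : IsCompact (SO n) := by
  refine Metric.isCompact_of_isClosed_isBounded ?_ ?_
  · exact (isClosed_eq (by fun_prop) continuous_const).inter
      (isClosed_eq (continuous_id.matrix_det) continuous_const)
  · exact Metric.isBounded_closedBall.subset fun A hA =>
      mem_closedBall_zero_iff.2 (norm_le_one_of_mem_SO hA)

end SpecialOrthogonal

theorem MeasureTheory.Integrable.of_continuous_of_ae_mem_compact {X E : Type*}
    [TopologicalSpace X] [T2Space X] [MeasurableSpace X] [OpensMeasurableSpace X]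
    [NormedAddCommGroup E] {μ : Measure X} [IsFiniteMeasure μ] {K : Set X} (hK : IsCompact K)
    (hμK : ∀ᵐ x ∂μ, x ∈ K) {g : X → E} (hg : Continuous g) : Integrable g μ := by
  rw [← Measure.restrict_eq_self_of_ae_mem hμK]
  exact hg.continuousOn.integrableOn_compact hK

/- The integral is the derivative at `0` of the constant function `t ↦ ∫ f (Φ t x) dμ(x)`;
compactness of the support dominates the derivatives. -/
theorem integral_fderiv_apply_velocity_eq_zero {E : Type*} [NormedAddCommGroup E]
    [NormedSpace ℝ E] [MeasurableSpace E] [BorelSpace E] {μ : Measure E} [IsFiniteMeasure μ]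
    {C : Set E} (hC : IsCompact C) (hμC : ∀ᵐ x ∂μ, x ∈ C) {Φ Φ' : ℝ → E → E}
    (hΦ : Continuous (Function.uncurry Φ)) (hΦ' : Continuous (Function.uncurry Φ'))
    (hΦΦ' : ∀ t x, HasDerivAt (Φ · x) (Φ' t x) t) (hΦ0 : ∀ x, Φ 0 x = x)
    (hμΦ : ∀ t, Measure.map (Φ t) μ = μ) {f : E → ℝ} (hf : ContDiff ℝ 1 f) :
    ∫ x, fderiv ℝ f x (Φ' 0 x) ∂μ = 0 := by
  set F' : ℝ → E → ℝ := fun t x => fderiv ℝ f (Φ t x) (Φ' t x)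
  have hF'_cont : Continuous (Function.uncurry F') :=
    ((hf.continuous_fderiv one_ne_zero).comp hΦ).clm_apply hΦ'
  obtain ⟨M, hM⟩ := ((isCompact_closedBall (0 : ℝ) 1).prod hC).exists_bound_of_continuousOn
    hF'_cont.continuousOn
  have hΦt : ∀ t, Continuous (Φ t) := fun t => hΦ.comp (Continuous.prodMk_right t)
  have hderiv := hasDerivAt_integral_of_dominated_loc_of_deriv_le (μ := μ) (x₀ := 0)
    (F := fun t x => f (Φ t x)) (bound := fun _ => M) (Metric.closedBall_mem_nhds 0 one_pos)
    (.of_forall fun t => (hf.continuous.comp (hΦt t)).aestronglyMeasurable)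
    (by simpa [hΦ0] using .of_continuous_of_ae_mem_compact hC hμC hf.continuous)
    (hF'_cont.comp (Continuous.prodMk_right 0)).aestronglyMeasurable
    (hμC.mono fun x hx t ht => hM (t, x) ⟨ht, hx⟩) (integrable_const M)
    (.of_forall fun x t _ => (hf.differentiable one_ne_zero _).hasFDerivAt.comp_hasDerivAt t
      (hΦΦ' t x))
  have hconst : (fun t => ∫ x, f (Φ t x) ∂μ) = fun _ => ∫ x, f x ∂μ := by
    funext t
    conv_rhs => rw [← hμΦ t]
    rw [integral_map (hΦt t).aemeasurable hf.continuous.aestronglyMeasurable]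
  rw [hconst] at hderiv
  simpa [F', hΦ0] using hderiv.2.unique (hasDerivAt_const 0 _)

theorem HasDerivAt.const_matrix_mul {m : Type*} [Fintype m] [DecidableEq m]
    {γ : ℝ → Matrix m m ℝ} {γ' : Matrix m m ℝ} {t : ℝ} (hγ : HasDerivAt γ γ' t)
    (Z : Matrix m m ℝ) : HasDerivAt (fun s => Z * γ s) (Z * γ') t :=
  (LinearMap.mulLeft ℝ Z).toContinuousLinearMap.hasFDerivAt.comp_hasDerivAt t hγ

section Haar

variable {n : ℕ} {μ : Measure (Matrix (Fin n) (Fin n) ℝ)}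

instance : BorelSpace (Matrix (Fin n) (Fin n) ℝ) :=
  Pi.borelSpace

/- `Matrix.normedAddCommGroup` is not reducible, so the topology it induces is not
instance-defeq to `instTopologicalSpaceMatrix`: the Borel structure is registered for both. -/
instance : @BorelSpace (Matrix (Fin n) (Fin n) ℝ)
    PseudoMetricSpace.toUniformSpace.toTopologicalSpace _ :=
  Pi.borelSpace

lemma IsHaarSO.ae_mem (hμ : IsHaarSO n μ) : ∀ᵐ Z ∂μ, Z ∈ SO n :=
  mem_ae_iff.2 hμ.2.1

lemma IsHaarSO.integral_fderiv_mul_planeSkew (hμ : IsHaarSO n μ)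
    {f : Matrix (Fin n) (Fin n) ℝ → ℝ} (hf : ContDiff ℝ 1 f) (i j : Fin n) :
    ∫ Z, fderiv ℝ f Z (Z * planeSkew i j) ∂μ = 0 := by
  rcases eq_or_ne i j with rfl | hij
  · simp
  have := hμ.1
  have h := integral_fderiv_apply_velocity_eq_zero isCompact_SO hμ.ae_mem
    (Φ := fun t Z => Z * givens i j t)
    (Φ' := fun t Z => Z * ((-sin t) • planeProj i j + cos t • planeSkew i j))
    (by unfold givens; fun_prop) (by fun_prop)
    (fun t Z => (hasDerivAt_givens t).const_matrix_mul Z) (by simp)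
    (fun t => hμ.2.2.2 _ (givens_mem_SO hij t)) hf
  simp only [cos_zero, sin_zero, neg_zero, zero_smul, one_smul, zero_add] at h
  exact h

end Haar

section Gradient

variable {n : ℕ} (f : Matrix (Fin n) (Fin n) ℝ → ℝ) (Z : Matrix (Fin n) (Fin n) ℝ)

lemma fderiv_mul_single_one (i j : Fin n) :
    fderiv ℝ f Z (Z * single i j 1) = ((grad f Z)ᵀ * Z) j i := by
  have hsum : Z * single i j 1 = ∑ a, Z a i • single a j 1 := by
    ext a b
    simp [mul_apply, single, Matrix.sum_apply, ite_and]
  rw [hsum, map_sum]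
  simp only [map_smul, smul_eq_mul, grad, mul_apply, transpose_apply, of_apply, mul_comm]

lemma skewPart_transpose_grad_mul_apply (i j : Fin n) :
    skewPart ((grad f Z)ᵀ * Z) i j = -(2⁻¹ * fderiv ℝ f Z (Z * planeSkew i j)) := by
  rw [planeSkew, mul_sub, map_sub, fderiv_mul_single_one, fderiv_mul_single_one]
  simp only [skewPart, Matrix.smul_apply, Matrix.sub_apply, transpose_apply, smul_eq_mul]
  ring

lemma smul_scoreG {Z : Matrix (Fin n) (Fin n) ℝ} (hfZ : f Z ≠ 0) :
    f Z • scoreG f Z = skewPart ((grad f Z)ᵀ * Z) := by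
  rw [scoreG, smul_smul, mul_inv_cancel₀ hfZ, one_smul]

variable {f}

lemma continuous_grad (hf : ContDiff ℝ 1 f) : Continuous (grad f) :=
  continuous_matrix fun _ _ => (hf.continuous_fderiv one_ne_zero).clm_apply continuous_const

end Gradient

theorem stmt1_general {n : ℕ} (μ : Measure (Matrix (Fin n) (Fin n) ℝ))
    (hμ : IsHaarSO n μ) (f : Matrix (Fin n) (Fin n) ℝ → ℝ) (hf : ContDiff ℝ 1 f) :
    (∫ Z, skewPart ((grad f Z)ᵀ * Z) ∂μ = 0) ∧
    ((∀ Z, 0 < f Z) → (∫ Z, f Z ∂μ = 1) → ∫ Z, f Z • scoreG f Z ∂μ = 0) := by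
  have := hμ.1
  have hcont : Continuous fun Z => skewPart ((grad f Z)ᵀ * Z) := by
    have := continuous_grad hf
    unfold skewPart
    fun_prop
  have hint := Integrable.of_continuous_of_ae_mem_compact isCompact_SO hμ.ae_mem hcont
  have hskew : ∫ Z, skewPart ((grad f Z)ᵀ * Z) ∂μ = 0 := by
    refine Matrix.ext fun i j => ?_
    calc (∫ Z, skewPart ((grad f Z)ᵀ * Z) ∂μ) i j
        = ∫ Z, skewPart ((grad f Z)ᵀ * Z) i j ∂μ :=
          ((entryLinearMap ℝ ℝ i j).toContinuousLinearMap.integral_comp_comm hint).symm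
      _ = -(2⁻¹ * ∫ Z, fderiv ℝ f Z (Z * planeSkew i j) ∂μ) := by
          simp only [skewPart_transpose_grad_mul_apply, integral_neg, integral_const_mul]
      _ = 0 := by simp [hμ.integral_fderiv_mul_planeSkew hf]
  refine ⟨hskew, fun hpos _ => ?_⟩
  simpa [smul_scoreG f (hpos _).ne'] using hskew

theorem stmt1 {n : ℕ} (hn : 1 ≤ n) (μ : Measure (Matrix (Fin n) (Fin n) ℝ))
    (hμ : IsHaarSO n μ) (f : Matrix (Fin n) (Fin n) ℝ → ℝ) (hf : ContDiff ℝ 1 f) :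
    (∫ Z, skewPart ((grad f Z)ᵀ * Z) ∂μ = 0) ∧
    ((∀ Z, 0 < f Z) → (∫ Z, f Z ∂μ = 1) → ∫ Z, f Z • scoreG f Z ∂μ = 0) :=
  stmt1_general μ hμ f hf
end
end

section
/- Let n ≥ 2 and let i, j, k, ℓ ∈ {1,…,n} with i ≠ j, k ≠ ℓ and {i,j} ≠ {k,ℓ}. Let E be the n×n matrix with E_{ij} = 1, E_{ji} = −1 and all other entries zero, and let E' be the n×n matrix with E'_{kℓ} = 1, E'_{ℓk} = −1 and all other entries zero. Then there exists a signed permutation matrix P ∈ O(n) (an orthogonal matrix each of whose entries is 0, 1 or −1, with exactly one nonzero entry in each row and column) such that PᵀEP = E' and PᵀE'P = −E. -/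
open Matrix

/-- The orthogonal group `O(n)`, as a set of `n × n` real matrices. -/
def ON (n : ℕ) : Set (Matrix (Fin n) (Fin n) ℝ) :=
  {A | A * Aᵀ = 1}

/-- A signed permutation matrix: an orthogonal matrix each of whose entries is `0`, `1`
or `-1`, with exactly one nonzero entry in each row and in each column. -/
def IsSignedPerm {n : ℕ} (P : Matrix (Fin n) (Fin n) ℝ) : Prop :=
  P ∈ ON n ∧ (∀ i j, P i j = 0 ∨ P i j = 1 ∨ P i j = -1) ∧
    (∀ i, ∃! j, P i j ≠ 0) ∧ (∀ j, ∃! i, P i j ≠ 0)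

/-!
Write `skew i j = e_i e_jᵀ - e_j e_iᵀ`. If `Pᵀ e_a = ε_a e_{σ a}` with signs `ε_a = ±1`, then
`Pᵀ (skew i j) P = ε_i ε_j skew (σ i) (σ j)`. Taking `σ = (i k)(j l)` and `ε = -1` exactly at `l`
gives `E ↦ E' ↦ -E` when the pairs `{i, j}`, `{k, l}` are disjoint and also when `i = k`. The other
overlaps reduce to `i = k`, since the relation `Pᵀ E P = F, Pᵀ F P = -E` is preserved by
`(E, F) ↦ (F, -E)` and by `(E, F) ↦ (-E, -F)`.
-/

open Equiv

section SignedPerm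

variable {ι R : Type*} [DecidableEq ι] [CommRing R]

def signedPerm (σ : Perm ι) (ε : ι → ℤˣ) : Matrix ι ι R :=
  of fun a b => if σ a = b then ((ε a : ℤ) : R) else 0

def skew (i j : ι) : Matrix ι ι R :=
  single i j 1 - single j i 1

lemma neg_skew (i j : ι) : -(skew i j : Matrix ι ι R) = skew j i :=
  neg_sub _ _

variable [Fintype ι]

lemma signedPerm_transpose_mul_single_mul (σ : Perm ι) (ε : ι → ℤˣ) (i j : ι) :
    (signedPerm σ ε)ᵀ * single i j (1 : R) * signedPerm σ ε =
      ((ε i * ε j : ℤˣ) : R) • single (σ i) (σ j) 1 := by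
  ext a b
  simp only [signedPerm, mul_apply, single, transpose_apply, of_apply, Matrix.smul_apply,
    smul_eq_mul, ite_and]
  rw [Finset.sum_eq_single j (fun c _ hc => by simp [Ne.symm hc]) (by simp)]
  split_ifs <;> simp_all

lemma signedPerm_transpose_mul_skew_mul (σ : Perm ι) (ε : ι → ℤˣ) (i j : ι) :
    (signedPerm σ ε)ᵀ * (skew i j : Matrix ι ι R) * signedPerm σ ε =
      ((ε i * ε j : ℤˣ) : R) • skew (σ i) (σ j) := by
  rw [skew, mul_sub, sub_mul, signedPerm_transpose_mul_single_mul,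
    signedPerm_transpose_mul_single_mul, skew, smul_sub, mul_comm (ε j)]

lemma signedPerm_mul_transpose_self (σ : Perm ι) (ε : ι → ℤˣ) :
    signedPerm σ ε * (signedPerm σ ε)ᵀ = (1 : Matrix ι ι R) := by
  ext a b
  simp only [signedPerm, mul_apply, transpose_apply, of_apply, one_apply]
  rw [Finset.sum_eq_single (σ a) (fun c _ hc => by simp [Ne.symm hc]) (by simp)]
  rcases eq_or_ne a b with rfl | hab
  · rw [if_pos rfl, if_pos rfl, ← Int.cast_mul, ← Units.val_mul,
      Int.units_mul_self, Units.val_one, Int.cast_one]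
  · simp [hab, (σ.injective.ne hab).symm]

end SignedPerm

lemma isSignedPerm_signedPerm {n : ℕ} (σ : Perm (Fin n)) (ε : Fin n → ℤˣ) :
    IsSignedPerm (signedPerm σ ε : Matrix (Fin n) (Fin n) ℝ) := by
  have hε : ∀ a, ((ε a : ℤ) : ℝ) = 1 ∨ ((ε a : ℤ) : ℝ) = -1 := fun a => by
    rcases Int.units_eq_one_or (ε a) with h | h <;> simp [h]
  have hne : ∀ a b, (signedPerm σ ε : Matrix (Fin n) (Fin n) ℝ) a b ≠ 0 ↔ σ a = b := by
    intro a b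
    by_cases h : σ a = b <;> simp [signedPerm, h]
  refine ⟨signedPerm_mul_transpose_self σ ε, fun a b => ?_,
    fun a => ⟨σ a, (hne a _).2 rfl, fun c hc => ((hne a c).1 hc).symm⟩,
    fun b => ⟨σ.symm b, (hne _ b).2 (σ.apply_symm_apply b), fun c hc =>
      σ.eq_symm_apply.2 ((hne c b).1 hc)⟩⟩
  simp only [signedPerm, of_apply]
  split_ifs
  exacts [Or.inr (hε a), Or.inl rfl]

section QuarterTurn

variable {ι R : Type*} [Fintype ι] [Ring R]

def IsQuarterTurn (P E F : Matrix ι ι R) : Prop :=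
  Pᵀ * E * P = F ∧ Pᵀ * F * P = -E

lemma IsQuarterTurn.rotate {P E F : Matrix ι ι R} (h : IsQuarterTurn P E F) :
    IsQuarterTurn P F (-E) :=
  ⟨h.2, by rw [mul_neg, neg_mul, h.1]⟩

lemma IsQuarterTurn.neg {P E F : Matrix ι ι R} (h : IsQuarterTurn P E F) :
    IsQuarterTurn P (-E) (-F) :=
  ⟨by rw [mul_neg, neg_mul, h.1], by rw [mul_neg, neg_mul, h.2]⟩

end QuarterTurn

lemma isQuarterTurn_skew {ι R : Type*} [Fintype ι] [DecidableEq ι] [CommRing R] {i j k l : ι}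
    (hij : i ≠ j) (hkl : k ≠ l) (hil : i ≠ l) (hjk : j ≠ k) (hjl : j ≠ l) :
    IsQuarterTurn (signedPerm ((swap i k).trans (swap j l)) (Pi.mulSingle l (-1)))
      (skew i j : Matrix ι ι R) (skew k l) := by
  simp only [IsQuarterTurn, signedPerm_transpose_mul_skew_mul, trans_apply, swap_apply_left,
    swap_apply_right, swap_apply_of_ne_of_ne hij hil, swap_apply_of_ne_of_ne hjk.symm hkl,
    swap_apply_of_ne_of_ne hij.symm hjk, swap_apply_of_ne_of_ne hil.symm hkl.symm,
    Pi.mulSingle_eq_same, Pi.mulSingle_eq_of_ne hil, Pi.mulSingle_eq_of_ne hjl,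
    Pi.mulSingle_eq_of_ne hkl]
  simp [neg_skew]

theorem stmt2_general {n : ℕ} (i j k l : Fin n) (hij : i ≠ j) (hkl : k ≠ l)
    (hne : ({i, j} : Finset (Fin n)) ≠ ({k, l} : Finset (Fin n))) :
    ∃ P : Matrix (Fin n) (Fin n) ℝ, IsSignedPerm P ∧
      Pᵀ * (Matrix.single i j (1 : ℝ) - Matrix.single j i 1) * P =
        Matrix.single k l 1 - Matrix.single l k 1 ∧
      Pᵀ * (Matrix.single k l (1 : ℝ) - Matrix.single l k 1) * P =
        -(Matrix.single i j 1 - Matrix.single j i 1) := by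
  obtain ⟨σ, ε, h⟩ : ∃ σ ε, IsQuarterTurn (signedPerm σ ε) (skew i j) (skew k l) := by
    by_cases hil : i = l
    · subst hil
      have hjk : k ≠ j := by rintro rfl; exact hne (Finset.pair_comm _ _)
      exact ⟨_, _, by simpa only [neg_skew] using
        (isQuarterTurn_skew (R := ℝ) hkl.symm hij hij hkl hjk).rotate⟩
    by_cases hjk : j = k
    · subst hjk
      exact ⟨_, _, by simpa only [neg_neg, neg_skew] using
        (isQuarterTurn_skew (R := ℝ) hkl hij.symm hij.symm hkl.symm (Ne.symm hil)).neg.rotate⟩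
    by_cases hjl : j = l
    · subst hjl
      have hik : i ≠ k := by rintro rfl; exact hne rfl
      exact ⟨_, _, by simpa only [neg_skew] using
        (isQuarterTurn_skew (R := ℝ) hij.symm hkl.symm hkl.symm hij hik).neg⟩
    exact ⟨_, _, isQuarterTurn_skew hij hkl hil hjk hjl⟩
  exact ⟨_, isSignedPerm_signedPerm σ ε, h⟩

theorem stmt2 {n : ℕ} (hn : 2 ≤ n) (i j k l : Fin n) (hij : i ≠ j) (hkl : k ≠ l)
    (hne : ({i, j} : Finset (Fin n)) ≠ ({k, l} : Finset (Fin n))) :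
    ∃ P : Matrix (Fin n) (Fin n) ℝ, IsSignedPerm P ∧
      Pᵀ * (Matrix.single i j (1 : ℝ) - Matrix.single j i 1) * P =
        Matrix.single k l 1 - Matrix.single l k 1 ∧
      Pᵀ * (Matrix.single k l (1 : ℝ) - Matrix.single l k 1) * P =
        -(Matrix.single i j 1 - Matrix.single j i 1) :=
  stmt2_general i j k l hij hkl hne
end

section
/- Let n ≥ 2. Let f̃ : ℝ^{n×n} → ℝ be continuously differentiable, positive, and spectral (f̃(QZQᵀ) = f̃(Z) for every Q ∈ O(n) and every Z ∈ ℝ^{n×n}), with ∫_{SO(n)} f̃ dμ = 1. Fix R ∈ SO(n) and the score map G(Z) = (1/f̃(Z))·skew((∇f̃(Z))ᵀZ). For 1 ≤ p < q ≤ n define h_{pq}(Z) = ⟨G(Z), R·E_{pq}·Rᵀ⟩, where E_{pq} is the n×n matrix with (p,q) entry 1/√2, (q,p) entry −1/√2 and zeros elsewhere. Then for any two distinct index pairs (p,q) ≠ (r,s) (p<q, r<s): ∫_{SO(n)} h_{pq}(Z) dμ-mean vanishes, i.e. ∫ h_{pq}(Z) f̃(Z) dμ(Z) = 0, and h_{pq},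 h_{rs} are uncorrelated: ∫_{SO(n)} h_{pq}(Z)·h_{rs}(Z)·f̃(Z) dμ(Z) = 0. -/
open Matrix MeasureTheory Real

noncomputable section

attribute [local instance] Matrix.normedAddCommGroup Matrix.normedSpace

/-- The Frobenius inner product `⟨A, B⟩ = trace(Aᵀ B)`. -/
def frobInner {n : ℕ} (A B : Matrix (Fin n) (Fin n) ℝ) : ℝ :=
  (Aᵀ * B).trace

/-- The elementary skew-symmetric matrix `E_{pq}` with `(p,q)` entry `1/√2`, `(q,p)` entry
`-1/√2` and zeros elsewhere. -/
def Ebasis {n : ℕ} (p q : Fin n) : Matrix (Fin n) (Fin n) ℝ :=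
  (Real.sqrt 2)⁻¹ • (Matrix.single p q 1 - Matrix.single q p 1)

/-- `h_{pq}(Z) = ⟨G(Z), R · E_{pq} · Rᵀ⟩`. -/
def hFun {n : ℕ} (f : Matrix (Fin n) (Fin n) ℝ → ℝ) (R : Matrix (Fin n) (Fin n) ℝ)
    (p q : Fin n) (Z : Matrix (Fin n) (Fin n) ℝ) : ℝ :=
  frobInner (scoreG f Z) (R * Ebasis p q * Rᵀ)

/-! Conjugation by any `Q ∈ O(n)` preserves the Haar measure of `SO(n)`: the image measure is
again a left-invariant probability measure on `SO(n)`, hence equals `μ` by a Fubini argument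
against right invariance. Because `f` is spectral, the same conjugation transports its gradient
and therefore the score, `G(QZQᵀ) = Q G(Z) Qᵀ`. For the reflection `Q = R D_t Rᵀ`, with `D_t`
flipping the sign of the `t`-th coordinate, this gives `h_{ab}(QZQᵀ) = ± h_{ab}(Z)`, the sign
being `-1` exactly when `t` is one of `a ≠ b`. Taking `t = p` makes `h_{pq} f` odd, and taking
`t` in exactly one of `{p, q}`, `{r, s}` makes `h_{pq} h_{rs} f` odd; an odd function has
integral zero against an invariant measure. -/

open scoped ENNReal

instance {n : ℕ} : BorelSpace (Matrix (Fin n) (Fin n) ℝ) := Pi.borelSpace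

instance {n : ℕ} : SecondCountableTopology (Matrix (Fin n) (Fin n) ℝ) :=
  inferInstanceAs (SecondCountableTopology (Fin n → Fin n → ℝ))

section

variable {n : ℕ}

local notation "Mat" => Matrix (Fin n) (Fin n) ℝ

lemma transpose_mul_self_of_mem_ON {Q : Mat} (hQ : Q ∈ ON n) : Qᵀ * Q = 1 :=
  mul_eq_one_comm.mp hQ

lemma transpose_mem_ON {Q : Mat} (hQ : Q ∈ ON n) : Qᵀ ∈ ON n := by
  simpa [ON] using transpose_mul_self_of_mem_ON hQ

lemma isClosed_SO : IsClosed (SO n) :=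
  (isClosed_eq (continuous_id.mul continuous_id.matrix_transpose) continuous_const).inter
    (isClosed_eq continuous_id.matrix_det continuous_const)

lemma conj_mem_SO {Q g : Mat} (hQ : Q ∈ ON n) (hg : g ∈ SO n) : Q * g * Qᵀ ∈ SO n := by
  have hQQ : Qᵀ * Q = 1 := transpose_mul_self_of_mem_ON hQ
  have hdet : Q.det * Q.det = 1 := by
    simpa [Matrix.det_mul, Matrix.det_transpose] using congrArg Matrix.det hQ.out
  refine ⟨?_, ?_⟩
  · calc Q * g * Qᵀ * (Q * g * Qᵀ)ᵀ = Q * g * (Qᵀ * Q) * gᵀ * Qᵀ := by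
          simp only [Matrix.transpose_mul, Matrix.transpose_transpose, Matrix.mul_assoc]
      _ = 1 := by rw [hQQ, Matrix.mul_one, Matrix.mul_assoc Q, hg.1, Matrix.mul_one, hQ.out]
  · rw [Matrix.det_mul, Matrix.det_mul, hg.2, Matrix.det_transpose, mul_one, hdet]

def orthoConj (Q : Mat) (hQ : Q ∈ ON n) : Mat ≃L[ℝ] Mat :=
  LinearEquiv.toContinuousLinearEquiv
    { toFun := fun Z => Q * Z * Qᵀ
      invFun := fun Z => Qᵀ * Z * Q
      map_add' := fun A B => by simp only [Matrix.mul_add, Matrix.add_mul]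
      map_smul' := fun c A => by simp only [RingHom.id_apply, Matrix.smul_mul, Matrix.mul_smul]
      left_inv := fun Z => by
        simp only [← Matrix.mul_assoc, transpose_mul_self_of_mem_ON hQ, Matrix.one_mul]
        rw [Matrix.mul_assoc, transpose_mul_self_of_mem_ON hQ, Matrix.mul_one]
      right_inv := fun Z => by
        simp only [← Matrix.mul_assoc, hQ.out, Matrix.one_mul]
        rw [Matrix.mul_assoc, hQ.out, Matrix.mul_one] }

@[simp]
lemma orthoConj_apply {Q : Mat} (hQ : Q ∈ ON n) (Z : Mat) : orthoConj Q hQ Z = Q * Z * Qᵀ :=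
  rfl

/-- Fubini: `ν s = ∫∫ 1_s(xy) dν(y) dμ(x) = ∫∫ 1_s(xy) dμ(x) dν(y) = μ s`. -/
lemma IsHaarSO.eq_of_map_mul_left {μ ν : Measure Mat} (hμ : IsHaarSO n μ)
    [IsProbabilityMeasure ν] (hνSO : ν (SO n)ᶜ = 0)
    (hν : ∀ g ∈ SO n, ν.map (g * ·) = ν) : ν = μ := by
  obtain ⟨hprob, hμSO, -, hμr⟩ := hμ
  have hμae : ∀ᵐ x ∂μ, x ∈ SO n := mem_ae_iff.2 hμSO
  have hνae : ∀ᵐ y ∂ν, y ∈ SO n := mem_ae_iff.2 hνSO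
  ext s hs
  have hind : Measurable (s.indicator (1 : Mat → ℝ≥0∞)) := measurable_one.indicator hs
  have hν_inner : ∀ x ∈ SO n, ∫⁻ y, s.indicator 1 (x * y) ∂ν = ν s := fun x hx => by
    rw [← lintegral_map hind (continuous_const_mul x).measurable, hν x hx,
      lintegral_indicator_one hs]
  have hμ_inner : ∀ y ∈ SO n, ∫⁻ x, s.indicator 1 (x * y) ∂μ = μ s := fun y hy => by
    rw [← lintegral_map hind (continuous_mul_const y).measurable, hμr y hy,
      lintegral_indicator_one hs]
  calc ν s = ∫⁻ x, ∫⁻ y, s.indicator 1 (x * y) ∂ν ∂μ := by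
        rw [lintegral_congr_ae (hμae.mono hν_inner), lintegral_const,
          measure_univ, mul_one]
    _ = ∫⁻ y, ∫⁻ x, s.indicator 1 (x * y) ∂μ ∂ν :=
        lintegral_lintegral_swap (hind.comp continuous_mul.measurable).aemeasurable
    _ = μ s := by
        rw [lintegral_congr_ae (hνae.mono hμ_inner), lintegral_const,
          measure_univ, mul_one]

lemma IsHaarSO.measurePreserving_conj {μ : Measure Mat} (hμ : IsHaarSO n μ) {Q : Mat}
    (hQ : Q ∈ ON n) : MeasurePreserving (orthoConj Q hQ) μ μ := by
  have hc : Measurable (orthoConj Q hQ) := (orthoConj Q hQ).continuous.measurable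
  have := hμ.1
  have := Measure.isProbabilityMeasure_map (μ := μ) hc.aemeasurable
  refine ⟨hc, hμ.eq_of_map_mul_left ?_ fun g hg => ?_⟩
  · rw [Measure.map_apply hc isClosed_SO.measurableSet.compl]
    refine measure_mono_null ?_ hμ.2.1
    intro Z hZ hZSO
    exact hZ (conj_mem_SO hQ hZSO)
  · have hcomm : (g * ·) ∘ orthoConj Q hQ = orthoConj Q hQ ∘ ((Qᵀ * g * Q) * ·) := by
      funext Z
      calc g * (Q * Z * Qᵀ) = (Q * Qᵀ) * g * (Q * Z * Qᵀ) := by rw [hQ.out, Matrix.one_mul]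
        _ = Q * (Qᵀ * g * Q * Z) * Qᵀ := by noncomm_ring
    have hg' : Qᵀ * g * Q ∈ SO n := by
      simpa using conj_mem_SO (transpose_mem_ON hQ) hg
    rw [Measure.map_map (continuous_const_mul g).measurable hc, hcomm,
      ← Measure.map_map hc (continuous_const_mul _).measurable, hμ.2.2.1 _ hg']

lemma IsHaarSO.integral_eq_zero_of_conj_eq_neg {μ : Measure Mat} (hμ : IsHaarSO n μ)
    {Q : Mat} (hQ : Q ∈ ON n) {φ : Mat → ℝ} (hφ : ∀ Z, φ (Q * Z * Qᵀ) = -φ Z) :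
    ∫ Z, φ Z ∂μ = 0 := by
  have := (hμ.measurePreserving_conj hQ).integral_comp'
    (f := (orthoConj Q hQ).toHomeomorph.toMeasurableEquiv) φ
  simp only [Homeomorph.toMeasurableEquiv_coe, ContinuousLinearEquiv.coe_toHomeomorph,
    orthoConj_apply, hφ, integral_neg] at this
  linarith

lemma frobInner_single_one (A : Mat) (i j : Fin n) :
    frobInner A (Matrix.single i j 1) = A i j := by
  simp [frobInner, Matrix.trace_mul_single]

lemma frobInner_smul_right (c : ℝ) (A B : Mat) : frobInner A (c • B) = c * frobInner A B := by
  rw [frobInner, Matrix.mul_smul, Matrix.trace_smul, frobInner, smul_eq_mul]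

lemma frobInner_conj (Q A B : Mat) : frobInner (Q * A * Qᵀ) B = frobInner A (Qᵀ * B * Q) := by
  have h : (Q * A * Qᵀ)ᵀ * B = Q * (Aᵀ * (Qᵀ * B)) := by
    simp only [Matrix.transpose_mul, Matrix.transpose_transpose, Matrix.mul_assoc]
  rw [frobInner, h, Matrix.trace_mul_comm, frobInner, Matrix.mul_assoc, Matrix.mul_assoc]

lemma ContinuousLinearMap.apply_eq_frobInner (L : Mat →L[ℝ] ℝ) (H : Mat) :
    L H = frobInner (Matrix.of fun i j => L (Matrix.single i j 1)) H := by
  have hsingle : ∀ i j, Matrix.single i j (H i j) = H i j • Matrix.single i j (1 : ℝ) := by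
    simp [Matrix.smul_single]
  conv_lhs => rw [H.matrix_eq_sum_single]
  simp only [map_sum, hsingle, map_smul, smul_eq_mul, frobInner, Matrix.trace, Matrix.diag,
    Matrix.mul_apply, Matrix.transpose_apply, Matrix.of_apply]
  rw [Finset.sum_comm]
  simp only [mul_comm]

lemma fderiv_apply_eq_frobInner_grad (f : Mat → ℝ) (Z H : Mat) :
    fderiv ℝ f Z H = frobInner (grad f Z) H :=
  (fderiv ℝ f Z).apply_eq_frobInner H

lemma grad_conj {f : Mat → ℝ} {Q : Mat} (hQ : Q ∈ ON n) (hfQ : ∀ Z, f (Q * Z * Qᵀ) = f Z)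
    (Z : Mat) : grad f (Q * Z * Qᵀ) = Q * grad f Z * Qᵀ := by
  have hfc : f ∘ orthoConj Q hQ = f := funext hfQ
  have hchain : ∀ H, fderiv ℝ f (Q * Z * Qᵀ) (Q * H * Qᵀ) = fderiv ℝ f Z H := fun H =>
    calc fderiv ℝ f (Q * Z * Qᵀ) (Q * H * Qᵀ)
        = fderiv ℝ (f ∘ orthoConj Q hQ) Z H :=
          (DFunLike.congr_fun ((orthoConj Q hQ).comp_right_fderiv (f := f) (x := Z)) H).symm
      _ = fderiv ℝ f Z H := by rw [hfc]
  ext i j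
  have hS : Q * (Qᵀ * Matrix.single i j 1 * Q) * Qᵀ = Matrix.single i j 1 :=
    (orthoConj Q hQ).apply_symm_apply _
  calc grad f (Q * Z * Qᵀ) i j = fderiv ℝ f (Q * Z * Qᵀ) (Matrix.single i j 1) := rfl
    _ = fderiv ℝ f Z (Qᵀ * Matrix.single i j 1 * Q) := by rw [← hchain, hS]
    _ = (Q * grad f Z * Qᵀ) i j := by
        rw [fderiv_apply_eq_frobInner_grad, ← frobInner_conj, frobInner_single_one]

lemma skewPart_conj (Q M : Mat) : skewPart (Q * M * Qᵀ) = Q * skewPart M * Qᵀ := by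
  simp only [skewPart, Matrix.transpose_mul, Matrix.transpose_transpose, Matrix.smul_mul,
    Matrix.mul_smul, Matrix.mul_sub, Matrix.sub_mul, Matrix.mul_assoc]

lemma scoreG_conj {f : Mat → ℝ} {Q : Mat} (hQ : Q ∈ ON n)
    (hfQ : ∀ Z, f (Q * Z * Qᵀ) = f Z) (Z : Mat) :
    scoreG f (Q * Z * Qᵀ) = Q * scoreG f Z * Qᵀ := by
  have hM : (Q * grad f Z * Qᵀ)ᵀ * (Q * Z * Qᵀ) = Q * ((grad f Z)ᵀ * Z) * Qᵀ := by
    simp only [Matrix.transpose_mul, Matrix.transpose_transpose]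
    calc Q * ((grad f Z)ᵀ * Qᵀ) * (Q * Z * Qᵀ)
        = Q * (grad f Z)ᵀ * (Qᵀ * Q) * Z * Qᵀ := by noncomm_ring
      _ = Q * ((grad f Z)ᵀ * Z) * Qᵀ := by
          rw [transpose_mul_self_of_mem_ON hQ]; noncomm_ring
  rw [scoreG, scoreG, hfQ, grad_conj hQ hfQ, hM, skewPart_conj, Matrix.mul_smul,
    Matrix.smul_mul]

lemma hFun_conj {f : Mat → ℝ} {Q : Mat} (hQ : Q ∈ ON n) (hfQ : ∀ Z, f (Q * Z * Qᵀ) = f Z)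
    (R : Mat) (a b : Fin n) (Z : Mat) :
    hFun f R a b (Q * Z * Qᵀ) = frobInner (scoreG f Z) (Qᵀ * (R * Ebasis a b * Rᵀ) * Q) := by
  rw [hFun, scoreG_conj hQ hfQ, frobInner_conj]

def flipSign (t i : Fin n) : ℝ := if i = t then -1 else 1

lemma flipSign_mul_self (t i : Fin n) : flipSign t i * flipSign t i = 1 := by
  unfold flipSign; split_ifs <;> norm_num

lemma diagonal_mul_single_mul_diagonal (d : Fin n → ℝ) (a b : Fin n) (c : ℝ) :
    Matrix.diagonal d * Matrix.single a b c * Matrix.diagonal d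
      = Matrix.single a b (d a * c * d b) := by
  ext i j
  simp only [Matrix.mul_diagonal, Matrix.diagonal_mul, Matrix.single_apply]
  split_ifs with h
  · rw [h.1, h.2]
  · simp

lemma diagonal_mul_Ebasis_mul_diagonal (d : Fin n → ℝ) (a b : Fin n) :
    Matrix.diagonal d * Ebasis a b * Matrix.diagonal d = (d a * d b) • Ebasis a b := by
  simp only [Ebasis, Matrix.mul_sub, Matrix.sub_mul, diagonal_mul_single_mul_diagonal, smul_sub,
    Matrix.smul_single, smul_eq_mul]
  congr 2 <;> ring

/-- The reflection in the hyperplane orthogonal to the `t`-th column of `R`. -/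
def reflection (R : Mat) (t : Fin n) : Mat := R * Matrix.diagonal (flipSign t) * Rᵀ

lemma reflection_transpose (R : Mat) (t : Fin n) : (reflection R t)ᵀ = reflection R t := by
  simp [reflection, Matrix.transpose_mul, Matrix.mul_assoc]

lemma reflection_mem_ON {R : Mat} (hR : R ∈ ON n) (t : Fin n) : reflection R t ∈ ON n := by
  have hD : Matrix.diagonal (flipSign t) * Matrix.diagonal (flipSign t) = 1 := by
    rw [Matrix.diagonal_mul_diagonal, ← Matrix.diagonal_one]
    exact congrArg Matrix.diagonal (funext (flipSign_mul_self t))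
  show reflection R t * (reflection R t)ᵀ = 1
  calc reflection R t * (reflection R t)ᵀ
      = R * Matrix.diagonal (flipSign t) * (Rᵀ * R) * Matrix.diagonal (flipSign t) * Rᵀ := by
        rw [reflection_transpose, reflection]; noncomm_ring
    _ = 1 := by
        rw [transpose_mul_self_of_mem_ON hR, Matrix.mul_one, Matrix.mul_assoc R, hD,
          Matrix.mul_one, hR.out]

lemma hFun_reflection {f : Mat → ℝ} {R : Mat} (hR : R ∈ ON n) {t : Fin n}
    (hf : ∀ Z, f (reflection R t * Z * (reflection R t)ᵀ) = f Z) (a b : Fin n) (Z : Mat) :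
    hFun f R a b (reflection R t * Z * (reflection R t)ᵀ)
      = flipSign t a * flipSign t b * hFun f R a b Z := by
  have hRR : Rᵀ * R = 1 := transpose_mul_self_of_mem_ON hR
  have hconj : (reflection R t)ᵀ * (R * Ebasis a b * Rᵀ) * reflection R t
      = (flipSign t a * flipSign t b) • (R * Ebasis a b * Rᵀ) := by
    calc (reflection R t)ᵀ * (R * Ebasis a b * Rᵀ) * reflection R t
        = R * (Matrix.diagonal (flipSign t) * (Rᵀ * R) * Ebasis a b * (Rᵀ * R)
            * Matrix.diagonal (flipSign t)) * Rᵀ := by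
          rw [reflection_transpose, reflection]; noncomm_ring
      _ = (flipSign t a * flipSign t b) • (R * Ebasis a b * Rᵀ) := by
          rw [hRR, Matrix.mul_one, Matrix.mul_one, diagonal_mul_Ebasis_mul_diagonal,
            Matrix.mul_smul, Matrix.smul_mul]
  rw [hFun_conj (reflection_mem_ON hR t) hf, hconj, frobInner_smul_right]
  rfl

lemma exists_flipSign_mul_eq_neg_one {p q r s : Fin n} (hpq : p < q) (hrs : r < s)
    (hne : (p, q) ≠ (r, s)) :
    ∃ t, flipSign t p * flipSign t q * (flipSign t r * flipSign t s) = -1 := by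
  by_cases hp : p = r ∨ p = s
  · have hq : q ≠ r ∧ q ≠ s := by
      rcases hp with rfl | rfl
      · exact ⟨hpq.ne', fun h => hne (by rw [h])⟩
      · exact ⟨(hrs.trans hpq).ne', hpq.ne'⟩
    refine ⟨q, ?_⟩
    simp [flipSign, hpq.ne, hq.1.symm, hq.2.symm]
  · obtain ⟨hpr, hps⟩ := not_or.mp hp
    refine ⟨p, ?_⟩
    simp [flipSign, hpq.ne', Ne.symm hpr, Ne.symm hps]

end

theorem stmt3_general {n : ℕ} (μ : Measure (Matrix (Fin n) (Fin n) ℝ))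
    (hμ : IsHaarSO n μ) (f : Matrix (Fin n) (Fin n) ℝ → ℝ)
    (hspec : ∀ Q ∈ ON n, ∀ Z, f (Q * Z * Qᵀ) = f Z)
    (R : Matrix (Fin n) (Fin n) ℝ) (hR : R ∈ SO n)
    (p q r s : Fin n) (hpq : p < q) (hrs : r < s) (hne : (p, q) ≠ (r, s)) :
    (∫ Z, hFun f R p q Z * f Z ∂μ = 0) ∧
    (∫ Z, hFun f R p q Z * hFun f R r s Z * f Z ∂μ = 0) := by
  have hQ (t : Fin n) : reflection R t ∈ ON n := reflection_mem_ON hR.1 t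
  have hf (t : Fin n) := hspec _ (hQ t)
  constructor
  · refine hμ.integral_eq_zero_of_conj_eq_neg (hQ p) fun Z => ?_
    rw [hFun_reflection hR.1 (hf p), hf p]
    simp [flipSign, hpq.ne']
  · obtain ⟨t, ht⟩ := exists_flipSign_mul_eq_neg_one hpq hrs hne
    refine hμ.integral_eq_zero_of_conj_eq_neg (hQ t) fun Z => ?_
    rw [hFun_reflection hR.1 (hf t), hFun_reflection hR.1 (hf t), hf t]
    linear_combination (hFun f R p q Z * hFun f R r s Z * f Z) * ht

theorem stmt3 {n : ℕ} (hn : 2 ≤ n) (μ : Measure (Matrix (Fin n) (Fin n) ℝ))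
    (hμ : IsHaarSO n μ) (f : Matrix (Fin n) (Fin n) ℝ → ℝ)
    (hf : ContDiff ℝ 1 f) (hpos : ∀ Z, 0 < f Z)
    (hspec : ∀ Q ∈ ON n, ∀ Z, f (Q * Z * Qᵀ) = f Z)
    (hnorm : ∫ Z, f Z ∂μ = 1)
    (R : Matrix (Fin n) (Fin n) ℝ) (hR : R ∈ SO n)
    (p q r s : Fin n) (hpq : p < q) (hrs : r < s) (hne : (p, q) ≠ (r, s)) :
    (∫ Z, hFun f R p q Z * f Z ∂μ = 0) ∧
    (∫ Z, hFun f R p q Z * hFun f R r s Z * f Z ∂μ = 0) :=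
  stmt3_general μ hμ f hspec R hR p q r s hpq hrs hne
end
end
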